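/- Let V and W be finite-dimensional vector spaces over the complex numbers, let g : V → W be a linear map, and let k be a natural number such that dim(g(V)) > k. Let {V_i}_{i ∈ I} be a family of linear subspaces of V such that the union ⋃_{i ∈ I} V_i spans V, and such that for any pair (i, j) ∈ I × I with i ≠ j there is a finite sequence i_1 = i, i_2, …, i_{t−1}, i_t = j of pairwise distinct elements of I with dim(g(V_{i_h} ∩ V_{i_{h+1}})) ≥ k for all h ∈ {1, …, t−1}. Then there exists an index i ∈ I such that dim(g(V_i)) > k. -/

import Mathlib

/-!
Suppose every `g(V_i)` had dimension at most `k`. If `dim g(V_i ∩ V_j) ≥ k`, then `g(V_i ∩ V_j)`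
already fills both `g(V_i)` and `g(V_j)`, so these images coincide. Along the chains the image
`g(V_i)` is therefore independent of `i`, and since the `V_i` span `V` it equals `g(V)`, whose
dimension exceeds `k`.
-/

open Module

theorem Fin.apply_zero_eq_apply_last {α : Type*} {n : ℕ} (u : Fin (n + 1) → α)
    (hu : ∀ m : Fin n, u m.castSucc = u m.succ) : u 0 = u (Fin.last n) := by
  suffices ∀ m : Fin (n + 1), u 0 = u m from this _
  intro m
  induction m using Fin.induction with
  | zero => rfl
  | succ m ih => exact ih.trans (hu m)

theorem Submodule.eq_of_common_le_of_finrank_le {K W : Type*} [DivisionRing K] [AddCommGroup W]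
    [Module K W] {P A B : Submodule K W} [FiniteDimensional K A] [FiniteDimensional K B]
    {k : ℕ} (hPA : P ≤ A) (hPB : P ≤ B) (hA : finrank K A ≤ k) (hB : finrank K B ≤ k)
    (hP : k ≤ finrank K P) : A = B :=
  (eq_of_le_of_finrank_le hPA (hA.trans hP)).symm.trans
    (eq_of_le_of_finrank_le hPB (hB.trans hP))

theorem stmt0_general {V W : Type*} [AddCommGroup V] [Module ℂ V] [AddCommGroup W] [Module ℂ W]
    [FiniteDimensional ℂ V]
    (g : V →ₗ[ℂ] W) (k : ℕ) (hg : k < Module.finrank ℂ (LinearMap.range g))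
    {I : Type*} (Vs : I → Submodule ℂ V) (hspan : ⨆ i, Vs i = ⊤)
    (hchain : ∀ i j : I, i ≠ j → ∃ t : ℕ, ∃ c : Fin (t + 2) → I,
      Function.Injective c ∧ c 0 = i ∧ c (Fin.last (t + 1)) = j ∧
      ∀ h : Fin (t + 1),
        k ≤ Module.finrank ℂ ((Vs (c h.castSucc) ⊓ Vs (c h.succ)).map g)) :
    ∃ i : I, k < Module.finrank ℂ ((Vs i).map g) := by
  by_contra! hsmall
  have hrange : LinearMap.range g = ⨆ i, (Vs i).map g := by
    rw [LinearMap.range_eq_map, ← hspan, Submodule.map_iSup]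
  obtain ⟨i₀⟩ : Nonempty I := by
    by_contra hI
    rw [not_nonempty_iff] at hI
    rw [hrange, iSup_of_empty, finrank_bot] at hg
    exact k.not_lt_zero hg
  have hadjacent : ∀ a b : I, k ≤ finrank ℂ ((Vs a ⊓ Vs b).map g) →
      (Vs a).map g = (Vs b).map g := fun a b hk =>
    Submodule.eq_of_common_le_of_finrank_le (Submodule.map_mono inf_le_left)
      (Submodule.map_mono inf_le_right) (hsmall a) (hsmall b) hk
  have hconst : ∀ i, (Vs i).map g = (Vs i₀).map g := by
    intro i
    obtain rfl | hne := eq_or_ne i₀ i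
    · rfl
    obtain ⟨t, c, -, rfl, rfl, hc⟩ := hchain i₀ i hne
    exact (Fin.apply_zero_eq_apply_last (fun m => (Vs (c m)).map g)
      fun m => hadjacent _ _ (hc m)).symm
  have hrange_le : LinearMap.range g ≤ (Vs i₀).map g := hrange ▸ iSup_le fun i => (hconst i).le
  exact hg.not_ge ((Submodule.finrank_mono hrange_le).trans (hsmall i₀))

/-- **Lemma (CL, Lemma (3.1))**: Let `g : V → W` be a linear map of finite-dimensional
complex vector spaces with `dim (g V) > k`. Let `{V_i}` be a family of subspaces of `V`
whose union spans `V`, such that any two distinct indices `i ≠ j` are connected by a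
finite sequence of pairwise distinct indices along which consecutive subspaces satisfy
`dim (g (V_i ∩ V_j)) ≥ k`. Then some `V_i` satisfies `dim (g V_i) > k`. -/
theorem stmt0 {V W : Type*} [AddCommGroup V] [Module ℂ V] [AddCommGroup W] [Module ℂ W]
    [FiniteDimensional ℂ V] [FiniteDimensional ℂ W]
    (g : V →ₗ[ℂ] W) (k : ℕ) (hg : k < Module.finrank ℂ (LinearMap.range g))
    {I : Type*} (Vs : I → Submodule ℂ V) (hspan : ⨆ i, Vs i = ⊤)
    (hchain : ∀ i j : I, i ≠ j → ∃ t : ℕ, ∃ c : Fin (t + 2) → I,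
      Function.Injective c ∧ c 0 = i ∧ c (Fin.last (t + 1)) = j ∧
      ∀ h : Fin (t + 1),
        k ≤ Module.finrank ℂ ((Vs (c h.castSucc) ⊓ Vs (c h.succ)).map g)) :
    ∃ i : I, k < Module.finrank ℂ ((Vs i).map g) :=
  stmt0_general g k hg Vs hspan hchain
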